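/- arXiv:1511.03033 — 2 statements merged into one kernel-verified Lean document; each statement's English description precedes it below -/
import Mathlib

section
/- Let V be a reflexive Banach space, K ⊆ V a closed convex set containing 0, Y ⊆ V a closed subspace, and g ∈ V*. Assume (A1): for any sequence {v_n} ⊆ Y∩K with |v_n| → 0 (where |·| is a continuous seminorm with kernel Y), v_n ⇀ v weakly, and ‖v_n‖ ≥ η > 0, there is a subsequence converging strongly to v. If ⟨g, y⟩ < 0 for all y ∈ (Y∩K)\{0} and the interior of the barrier cone B(Y∩K) is nonempty, then g lies in the interior of B(Y∩K). -/
/-!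
Let `S = Y ∩ K`. By reflexivity, closed bounded convex subsets of `V` are weakly compact.
If `g` were not bounded away from `0` on the unit sphere of `S`, a sequence `uₙ` there with
`g uₙ → 0` would have `0` as its only weak cluster point in `S` (the sign condition), hence
be weakly null, and (A1) would give a subsequence tending to `0` in norm, contradicting
`‖uₙ‖ = 1`. So `g ≤ -c` on that sphere for some `c > 0`; since `S` is convex and contains
`0`, this gives `g v ≤ -c ‖v‖` whenever `v ∈ S` and `‖v‖ ≥ 1`, and then every `h` with
`‖h - g‖ < c` is bounded above on `S` by `‖h‖`.
-/

open Filter Topology Set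

section

variable {V : Type*} [NormedAddCommGroup V] [NormedSpace ℝ V]

def barrierCone (S : Set V) : Set (StrongDual ℝ V) :=
  {h | ∃ M : ℝ, ∀ v ∈ S, h v ≤ M}

theorem StrongDual.continuous_comp_toWeakSpace_symm (f : StrongDual ℝ V) :
    Continuous fun x : WeakSpace ℝ V => f ((toWeakSpace ℝ V).symm x) :=
  WeakBilin.eval_continuous _ f

theorem isCompact_toWeakSpace_image_of_surjective_inclusionInDoubleDual
    (hrefl : Function.Surjective (NormedSpace.inclusionInDoubleDual ℝ V)) {T : Set V}
    (hconv : Convex ℝ T) (hcl : IsClosed T) (hbdd : Bornology.IsBounded T) :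
    IsCompact (toWeakSpace ℝ V '' T) := by
  have hrange : range (NormedSpace.inclusionInDoubleDualWeak ℝ V) = univ :=
    range_eq_univ.mpr fun φ => (hrefl (WeakDual.toStrongDual φ)).imp fun _ hx => hx
  have hcomp := NormedSpace.isCompact_closure_of_isBounded ℝ V (toWeakSpace ℝ V '' T)
    (by rwa [preimage_image_eq _ (toWeakSpace ℝ V).injective]) (hrange ▸ subset_univ _)
  rwa [← hconv.toWeakSpace_closure ℝ, hcl.closure_eq] at hcomp

theorem tendsto_dual_apply_zero_of_tendsto_apply_zero
    (hrefl : Function.Surjective (NormedSpace.inclusionInDoubleDual ℝ V)) {T : Set V}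
    (hconv : Convex ℝ T) (hcl : IsClosed T) (hbdd : Bornology.IsBounded T)
    {g : StrongDual ℝ V} (hg : ∀ x ∈ T, g x = 0 → x = 0)
    {ι : Type*} {l : Filter ι} {u : ι → V} (hu : ∀ i, u i ∈ T)
    (hgu : Tendsto (fun i => g (u i)) l (𝓝 0)) (f : StrongDual ℝ V) :
    Tendsto (fun i => f (u i)) l (𝓝 0) := by
  have hweak : Tendsto (fun i => toWeakSpace ℝ V (u i)) l (𝓝 (toWeakSpace ℝ V 0)) := by
    refine (isCompact_toWeakSpace_image_of_surjective_inclusionInDoubleDual hrefl hconv hcl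
      hbdd).tendsto_nhds_of_unique_mapClusterPt
      (Eventually.of_forall fun i => mem_image_of_mem _ (hu i)) ?_
    rintro _ ⟨x, hxT, rfl⟩ hx
    have hgx :=
      hx.tendsto_comp (g.continuous_comp_toWeakSpace_symm.tendsto (toWeakSpace ℝ V x))
    exact congrArg _ (hg x hxT (eq_of_nhds_neBot (ClusterPt.mono hgx hgu)))
  exact map_zero f ▸ (f.continuous_comp_toWeakSpace_symm.tendsto _).comp hweak

theorem exists_pos_forall_norm_eq_one_le_neg
    (hrefl : Function.Surjective (NormedSpace.inclusionInDoubleDual ℝ V)) {S : Set V}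
    (hconv : Convex ℝ S) (hcl : IsClosed S) {g : StrongDual ℝ V}
    (hsign : ∀ y ∈ S, y ≠ 0 → g y < 0)
    (hnull : ∀ u : ℕ → V, (∀ n, u n ∈ S) → (∀ n, ‖u n‖ = 1) →
      ¬ ∀ f : StrongDual ℝ V, Tendsto (fun n => f (u n)) atTop (𝓝 0)) :
    ∃ c > 0, ∀ v ∈ S, ‖v‖ = 1 → g v ≤ -c := by
  by_contra! hneg
  choose u huS hunorm hgu using fun n : ℕ => hneg (1 / ((n : ℝ) + 1)) Nat.one_div_pos_of_nat
  have hne : ∀ n, u n ≠ 0 := fun n h => by simpa [h] using hunorm n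
  have hgu0 : Tendsto (fun n => g (u n)) atTop (𝓝 0) := by
    refine tendsto_of_tendsto_of_tendsto_of_le_of_le ?_ tendsto_const_nhds
      (fun n => (hgu n).le) (fun n => (hsign _ (huS n) (hne n)).le)
    simpa using (tendsto_one_div_add_atTop_nhds_zero_nat (𝕜 := ℝ)).neg
  refine hnull u huS hunorm (tendsto_dual_apply_zero_of_tendsto_apply_zero hrefl
    (hconv.inter (convex_closedBall 0 1)) (hcl.inter Metric.isClosed_closedBall)
    (Metric.isBounded_closedBall.subset inter_subset_right) ?_
    (fun n => ⟨huS n, by simp [hunorm n]⟩) hgu0)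
  intro x hx hgx
  by_contra hx0
  exact (hsign x hx.1 hx0).ne hgx

theorem le_neg_mul_norm_of_forall_norm_eq_one {S : Set V} (hconv : Convex ℝ S)
    (h0 : (0 : V) ∈ S) {g : StrongDual ℝ V} {c : ℝ} (hc : ∀ v ∈ S, ‖v‖ = 1 → g v ≤ -c)
    {v : V} (hv : v ∈ S) (hv1 : 1 ≤ ‖v‖) : g v ≤ -c * ‖v‖ := by
  have hpos : 0 < ‖v‖ := one_pos.trans_le hv1
  have hunit : ‖v‖⁻¹ • v ∈ S :=
    hconv.smul_mem_of_zero_mem h0 hv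
      ⟨inv_nonneg.mpr hpos.le, inv_le_one_of_one_le₀ hv1⟩
  have h := hc _ hunit (by rw [norm_smul, norm_inv, norm_norm, inv_mul_cancel₀ hpos.ne'])
  rw [map_smul, smul_eq_mul, inv_mul_le_iff₀ hpos] at h
  linarith

theorem ball_subset_barrierCone {S : Set V} (hconv : Convex ℝ S) (h0 : (0 : V) ∈ S)
    {g : StrongDual ℝ V} {c : ℝ} (hc : ∀ v ∈ S, ‖v‖ = 1 → g v ≤ -c) :
    Metric.ball g c ⊆ barrierCone S := by
  intro h hh
  refine ⟨‖h‖, fun v hv => ?_⟩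
  rcases le_or_gt ‖v‖ 1 with hv1 | hv1
  · calc h v ≤ ‖h‖ * ‖v‖ := (le_abs_self _).trans (h.le_opNorm v)
      _ ≤ ‖h‖ := mul_le_of_le_one_right (norm_nonneg h) hv1
  · have hdist : ‖h - g‖ < c := by rwa [Metric.mem_ball, dist_eq_norm] at hh
    calc h v = g v + (h - g) v := by simp
      _ ≤ -c * ‖v‖ + ‖h - g‖ * ‖v‖ :=
        add_le_add (le_neg_mul_norm_of_forall_norm_eq_one hconv h0 hc hv hv1.le)
          ((le_abs_self _).trans ((h - g).le_opNorm v))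
      _ ≤ ‖h‖ := by nlinarith [norm_nonneg h]

theorem mem_interior_barrierCone {S : Set V} (hconv : Convex ℝ S) (h0 : (0 : V) ∈ S)
    {g : StrongDual ℝ V} {c : ℝ} (hcpos : 0 < c) (hc : ∀ v ∈ S, ‖v‖ = 1 → g v ≤ -c) :
    g ∈ interior (barrierCone S) :=
  mem_interior_iff_mem_nhds.mpr <|
    mem_of_superset (Metric.ball_mem_nhds g hcpos) (ball_subset_barrierCone hconv h0 hc)

end

theorem mem_interior_barrierCone_of_sign_condition_general
    {V : Type*} [NormedAddCommGroup V] [NormedSpace ℝ V]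
    (hrefl : Function.Surjective (NormedSpace.inclusionInDoubleDual ℝ V))
    (p : Seminorm ℝ V) (hp : Continuous p)
    (Y : Set V) (hY : Y = {v : V | p v = 0})
    (K : Set V) (hKcl : IsClosed K) (hKconv : Convex ℝ K) (h0K : (0 : V) ∈ K)
    (hA1 : ∀ (v : ℕ → V) (w : V) (η : ℝ), 0 < η →
      (∀ n, v n ∈ Y ∩ K) →
      Tendsto (fun n => p (v n)) atTop (nhds 0) →
      (∀ f : V →L[ℝ] ℝ, Tendsto (fun n => f (v n)) atTop (nhds (f w))) →
      (∀ n, η ≤ ‖v n‖) →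
      ∃ φ : ℕ → ℕ, StrictMono φ ∧ Tendsto (fun k => v (φ k)) atTop (nhds w))
    (g : V →L[ℝ] ℝ)
    (hsign : ∀ y ∈ Y ∩ K, y ≠ 0 → g y < 0) :
    g ∈ interior {h : V →L[ℝ] ℝ | ∃ M : ℝ, ∀ v ∈ Y ∩ K, h v ≤ M} := by
  have hYball : Y = p.closedBall 0 0 := by
    ext v
    simp [hY, (apply_nonneg p v).ge_iff_eq']
  have hconv : Convex ℝ (Y ∩ K) := (hYball ▸ p.convex_closedBall 0 0).inter hKconv
  have hcl : IsClosed (Y ∩ K) := (hY ▸ isClosed_eq hp continuous_const).inter hKcl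
  have hnull : ∀ u : ℕ → V, (∀ n, u n ∈ Y ∩ K) → (∀ n, ‖u n‖ = 1) →
      ¬ ∀ f : StrongDual ℝ V, Tendsto (fun n => f (u n)) atTop (𝓝 0) := by
    intro u hu hnorm hweak
    have hp0 : ∀ n, p (u n) = 0 := fun n => by simpa [hY] using (hu n).1
    obtain ⟨φ, -, hφ⟩ := hA1 u 0 1 one_pos hu (by simp [hp0])
      (by simpa using hweak) (fun n => (hnorm n).ge)
    simpa [hnorm] using hφ.norm
  obtain ⟨c, hcpos, hc⟩ := exists_pos_forall_norm_eq_one_le_neg hrefl hconv hcl hsign hnull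
  exact mem_interior_barrierCone hconv ⟨by simp [hY], h0K⟩ hcpos hc

/-- Proposition 1: in a reflexive Banach space, under the compactness condition
(A1), if `⟨g, y⟩ < 0` for all nonzero `y ∈ Y ∩ K` and the barrier cone of
`Y ∩ K` has nonempty interior, then `g` lies in the interior of that barrier
cone. Here `Y` is the kernel of the continuous seminorm `p` and `K` is closed
convex with `0 ∈ K`. -/
theorem mem_interior_barrierCone_of_sign_condition
    {V : Type*} [NormedAddCommGroup V] [NormedSpace ℝ V] [CompleteSpace V]
    (hrefl : Function.Surjective (NormedSpace.inclusionInDoubleDual ℝ V))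
    (p : Seminorm ℝ V) (hp : Continuous p)
    (Y : Set V) (hY : Y = {v : V | p v = 0})
    (K : Set V) (hKcl : IsClosed K) (hKconv : Convex ℝ K) (h0K : (0 : V) ∈ K)
    (hA1 : ∀ (v : ℕ → V) (w : V) (η : ℝ), 0 < η →
      (∀ n, v n ∈ Y ∩ K) →
      Tendsto (fun n => p (v n)) atTop (nhds 0) →
      (∀ f : V →L[ℝ] ℝ, Tendsto (fun n => f (v n)) atTop (nhds (f w))) →
      (∀ n, η ≤ ‖v n‖) →
      ∃ φ : ℕ → ℕ, StrictMono φ ∧ Tendsto (fun k => v (φ k)) atTop (nhds w))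
    (g : V →L[ℝ] ℝ)
    (hsign : ∀ y ∈ Y ∩ K, y ≠ 0 → g y < 0)
    (hint : (interior {h : V →L[ℝ] ℝ | ∃ M : ℝ, ∀ v ∈ Y ∩ K, h v ≤ M}).Nonempty) :
    g ∈ interior {h : V →L[ℝ] ℝ | ∃ M : ℝ, ∀ v ∈ Y ∩ K, h v ≤ M} :=
  mem_interior_barrierCone_of_sign_condition_general hrefl p hp Y hY K hKcl hKconv h0K hA1 g hsign
end

section
/- Under the hypotheses of the semicoercive existence theorem, the coercivity-type condition holds: there exists R > 0 such that ⟨Av, −v⟩ + φ(v,0) + ⟨g, v⟩ < 0 for all v ∈ K with ‖v‖ = R. -/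
/-!
Suppose the inequality fails on every sphere: then there are `vₙ ∈ K` with `‖vₙ‖ = n + 1` and
`c₀ p(vₙ)² ≤ ⟨Avₙ, vₙ⟩ ≤ φ(vₙ, 0) + ⟨g, vₙ⟩ ≤ c‖vₙ‖ + ⟨g, vₙ⟩`. Dividing by `‖vₙ‖` and `‖vₙ‖²`, the
unit vectors `wₙ = vₙ / ‖vₙ‖ ∈ K` satisfy `p(wₙ) → 0` and `⟨g, wₙ⟩ ≥ -c`. By reflexivity a
subsequence converges weakly, and then strongly by (A1), to some `x` with `‖x‖ = 1`, `p x = 0`,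
`⟨g, x⟩ ≥ -c`. Since `K` is closed, convex and contains `0`, the whole ray `ℝ₊ x` lies in
`Y ∩ K`, so `Y ∩ K` is unbounded and `x` violates the angle condition.
-/

open Filter Topology Set NormedSpace

theorem Submodule.mem_of_isClosed_of_forall_dual_eq_zero {E : Type*} [TopologicalSpace E]
    [AddCommGroup E] [Module ℝ E] [IsTopologicalAddGroup E] [ContinuousSMul ℝ E]
    [LocallyConvexSpace ℝ E] {W : Submodule ℝ E} (hW : IsClosed (W : Set E)) {v : E}
    (h : ∀ f : StrongDual ℝ E, (∀ u ∈ W, f u = 0) → f v = 0) : v ∈ W := by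
  by_contra hv
  obtain ⟨f, s, hfW, hfv⟩ := geometric_hahn_banach_closed_point W.convex hW hv
  have hf : ∀ u ∈ W, f u = 0 := fun u hu => by
    by_contra hfu
    have := hfW (((s + 1) / f u) • u) (W.smul_mem _ hu)
    rw [map_smul, smul_eq_mul, div_mul_cancel₀ _ hfu] at this
    linarith
  linarith [hfW 0 W.zero_mem, map_zero f, h f hf]

section WeakCompactness

variable {V : Type*} [NormedAddCommGroup V] [NormedSpace ℝ V]

theorem TopologicalSpace.IsSeparable.exists_seq_dual_separating {S : Set V} (hS : IsSeparable S) :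
    ∃ f : ℕ → StrongDual ℝ V, ∀ z ∈ S, (∀ n, f n z = 0) → z = 0 := by
  obtain ⟨T, hTc, hST⟩ := hS
  obtain ⟨q, hq⟩ := (hTc.insert 0).exists_eq_range (insert_nonempty _ _)
  choose f hf_norm hf_apply using fun n => exists_dual_vector'' ℝ (q n)
  refine ⟨f, fun z hz hfz => norm_le_zero_iff.mp ?_⟩
  have hq_near : range q ⊆ {y | ‖z‖ ≤ 2 * ‖z - y‖} := by
    rintro _ ⟨n, rfl⟩
    show ‖z‖ ≤ 2 * ‖z - q n‖
    have : ‖q n‖ ≤ ‖z - q n‖ := calc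
      ‖q n‖ = f n (q n - z) := by simp [hfz n, hf_apply n]
      _ ≤ ‖f n‖ * ‖q n - z‖ := (le_abs_self _).trans ((f n).le_opNorm _)
      _ ≤ ‖z - q n‖ := by
        rw [norm_sub_rev]; exact mul_le_of_le_one_left (norm_nonneg _) (hf_norm n)
    linarith [norm_le_norm_sub_add z (q n)]
  have hclosed : IsClosed {y | ‖z‖ ≤ 2 * ‖z - y‖} := isClosed_le continuous_const (by fun_prop)
  have hz : z ∈ closure (range q) := hq ▸ closure_mono (subset_insert _ _) (hST hz)
  simpa using closure_minimal hq_near hclosed hz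

theorem IsCompact.isSeqCompact_of_separating {X : Type*} [TopologicalSpace X] {s : Set X}
    (hs : IsCompact s) (f : ℕ → X → ℝ) (hf : ∀ n, Continuous (f n))
    (hsep : ∀ x ∈ s, ∀ y ∈ s, (∀ n, f n x = f n y) → x = y) : IsSeqCompact s := by
  have : CompactSpace s := isCompact_iff_compactSpace.mp hs
  have : TopologicalSpace.MetrizableSpace s :=
    Metric.PiNatEmbed.TopologicalSpace.MetrizableSpace.of_countable_separating
      (fun n (x : s) => f n x) (fun n => (hf n).comp continuous_subtype_val)
      fun x y hxy => by
        contrapose! hxy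
        exact Subtype.ext (hsep _ x.2 _ y.2 hxy)
  simpa using IsSeqCompact.range (continuous_subtype_val (p := (· ∈ s))).seqContinuous

theorem exists_eq_inclusionInDoubleDual_of_annihilator_le_ker
    (hrefl : Function.Surjective (inclusionInDoubleDual ℝ V)) {W : Submodule ℝ V}
    (hW : IsClosed (W : Set V)) {F : StrongDual ℝ (StrongDual ℝ V)}
    (hF : ∀ f : StrongDual ℝ V, (∀ u ∈ W, f u = 0) → F f = 0) :
    ∃ v ∈ W, inclusionInDoubleDual ℝ V v = F := by
  obtain ⟨v, rfl⟩ := hrefl F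
  exact ⟨v, Submodule.mem_of_isClosed_of_forall_dual_eq_zero hW hF, rfl⟩

theorem exists_subseq_weakly_tendsto_of_bounded
    (hrefl : Function.Surjective (inclusionInDoubleDual ℝ V)) {w : ℕ → V} {r : ℝ}
    (hw : ∀ n, ‖w n‖ ≤ r) :
    ∃ x : V, ∃ ψ : ℕ → ℕ, StrictMono ψ ∧
      ∀ f : StrongDual ℝ V, Tendsto (fun k => f (w (ψ k))) atTop (𝓝 (f x)) := by
  set W := (Submodule.span ℝ (range w)).topologicalClosure
  have hWc : IsClosed (W : Set V) := Submodule.isClosed_topologicalClosure _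
  have hwW : ∀ n, w n ∈ W :=
    fun n => Submodule.le_topologicalClosure _ (Submodule.subset_span (mem_range_self n))
  obtain ⟨f, hf⟩ :=
    ((countable_range w).isSeparable.span (R := ℝ)).closure.exists_seq_dual_separating
  -- By reflexivity, this weak-* compact set of the bidual is the image of the `r`-ball of `W`;
  -- the `f n` separate its points, which makes it sequentially compact.
  let C : Set (WeakDual ℝ (StrongDual ℝ V)) :=
    WeakDual.toStrongDual ⁻¹' Metric.closedBall 0 r ∩
      {F | ∀ g : StrongDual ℝ V, (∀ u ∈ W, g u = 0) → F g = 0}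
  have hC : IsCompact C := (WeakDual.isCompact_closedBall 0 r).inter_right <| by
    simp only [ofPred_forall]
    exact isClosed_iInter fun g => isClosed_iInter fun _ =>
      isClosed_eq (WeakDual.eval_continuous g) continuous_const
  have hCJ : ∀ F ∈ C, ∃ v ∈ W, StrongDual.toWeakDual (inclusionInDoubleDual ℝ V v) = F :=
    fun F hF => exists_eq_inclusionInDoubleDual_of_annihilator_le_ker hrefl hWc hF.2
  have hsep : ∀ F ∈ C, ∀ G ∈ C, (∀ n, F (f n) = G (f n)) → F = G := by
    intro F hF G hG hFG
    obtain ⟨v, hv, rfl⟩ := hCJ F hF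
    obtain ⟨u, hu, rfl⟩ := hCJ G hG
    have : v - u = 0 := hf _ (W.sub_mem hv hu) fun n => by
      rw [map_sub, sub_eq_zero]; exact hFG n
    rw [sub_eq_zero.mp this]
  have hwC : ∀ n, StrongDual.toWeakDual (inclusionInDoubleDual ℝ V (w n)) ∈ C := fun n =>
    ⟨(dist_zero_right (inclusionInDoubleDual ℝ V (w n))).trans_le
      ((double_dual_bound ℝ V (w n)).trans (hw n)), fun g hg => hg _ (hwW n)⟩
  obtain ⟨F, hF, ψ, hψ, hconv⟩ := hC.isSeqCompact_of_separating (fun n F => F (f n))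
    (fun n => WeakDual.eval_continuous _) hsep hwC
  obtain ⟨x, -, rfl⟩ := hCJ F hF
  exact ⟨x, ψ, hψ, fun g => ((WeakDual.eval_continuous g).tendsto _).comp hconv⟩

end WeakCompactness

section Recession

variable {V : Type*} [NormedAddCommGroup V] [NormedSpace ℝ V]

theorem IsClosed.smul_mem_of_tendsto_inv_norm_smul {ι : Type*} {l : Filter ι} [l.NeBot]
    {K : Set V} (hKcl : IsClosed K) (hKconv : Convex ℝ K) (h0K : (0 : V) ∈ K) {v : ι → V}
    (hvK : ∀ i, v i ∈ K) (hv : Tendsto (fun i => ‖v i‖) l atTop) {x : V}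
    (hx : Tendsto (fun i => ‖v i‖⁻¹ • v i) l (𝓝 x)) {t : ℝ} (ht : 0 ≤ t) : t • x ∈ K := by
  refine hKcl.mem_of_tendsto (hx.const_smul t) ?_
  filter_upwards [hv.eventually_ge_atTop t, hv.eventually_gt_atTop 0] with i hti hi
  rw [smul_smul]
  refine hKconv.smul_mem_of_zero_mem h0K (hvK i) ⟨by positivity, ?_⟩
  rwa [← div_eq_mul_inv, div_le_one hi]

theorem not_isBounded_of_forall_smul_mem {s : Set V} {x : V} (hx : x ≠ 0)
    (hs : ∀ t : ℝ, 0 ≤ t → t • x ∈ s) : ¬ Bornology.IsBounded s := by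
  rintro hbdd
  obtain ⟨M, hM⟩ := isBounded_iff_forall_norm_le.mp hbdd
  have hxpos : 0 < ‖x‖ := norm_pos_iff.mpr hx
  have := hM _ (hs ((|M| + 1) / ‖x‖) (by positivity))
  rw [norm_smul, Real.norm_of_nonneg (by positivity), div_mul_cancel₀ _ hxpos.ne'] at this
  linarith [le_abs_self M]

end Recession

section Semicoercive

variable {V : Type*} [NormedAddCommGroup V] [NormedSpace ℝ V] {p : Seminorm ℝ V}
  {g : StrongDual ℝ V} {c₀ c : ℝ} {v : V}

theorem seminorm_inv_norm_smul_sq_le (hc₀ : 0 < c₀) (hv : v ≠ 0)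
    (h : c₀ * p v ^ 2 ≤ c * ‖v‖ + g v) :
    p (‖v‖⁻¹ • v) ^ 2 ≤ (c + ‖g‖) / c₀ * ‖v‖⁻¹ := by
  have hv' : 0 < ‖v‖ := norm_pos_iff.mpr hv
  have hg : g v ≤ ‖g‖ * ‖v‖ := (le_abs_self _).trans (g.le_opNorm v)
  have hpv : p (‖v‖⁻¹ • v) ^ 2 = p v ^ 2 / ‖v‖ ^ 2 := by
    rw [map_smul_eq_mul, norm_inv, norm_norm, mul_pow, inv_pow, div_eq_inv_mul]
  have hrhs : (c + ‖g‖) / c₀ * ‖v‖⁻¹ * ‖v‖ ^ 2 = (c + ‖g‖) * ‖v‖ / c₀ := by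
    field_simp
  rw [hpv, div_le_iff₀ (by positivity), hrhs, le_div_iff₀ hc₀]
  nlinarith

theorem neg_le_apply_inv_norm_smul (hc₀ : 0 ≤ c₀) (hv : v ≠ 0)
    (h : c₀ * p v ^ 2 ≤ c * ‖v‖ + g v) : -c ≤ g (‖v‖⁻¹ • v) := by
  have hv' : 0 < ‖v‖ := norm_pos_iff.mpr hv
  rw [map_smul, smul_eq_mul, ← div_eq_inv_mul, le_div_iff₀ hv']
  nlinarith [sq_nonneg (p v)]

theorem exists_unit_recession_direction_of_tendsto
    (hrefl : Function.Surjective (inclusionInDoubleDual ℝ V)) (hp : Continuous p)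
    (hc₀ : 0 < c₀) {K : Set V} (hKcl : IsClosed K) (hKconv : Convex ℝ K) (h0K : (0 : V) ∈ K)
    (hA1 : ∀ (v : ℕ → V) (w : V) (η : ℝ), 0 < η →
      Tendsto (fun n => p (v n)) atTop (𝓝 0) →
      (∀ f : StrongDual ℝ V, Tendsto (fun n => f (v n)) atTop (𝓝 (f w))) →
      (∀ n, η ≤ ‖v n‖) →
      ∃ ψ : ℕ → ℕ, StrictMono ψ ∧ Tendsto (fun k => v (ψ k)) atTop (𝓝 w))
    {v : ℕ → V} (hvK : ∀ n, v n ∈ K) (hv0 : ∀ n, v n ≠ 0)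
    (hv : Tendsto (fun n => ‖v n‖) atTop atTop)
    (hineq : ∀ n, c₀ * p (v n) ^ 2 ≤ c * ‖v n‖ + g (v n)) :
    ∃ x, ‖x‖ = 1 ∧ p x = 0 ∧ -c ≤ g x ∧ ∀ t : ℝ, 0 ≤ t → t • x ∈ K := by
  set w := fun n => ‖v n‖⁻¹ • v n
  have hw1 : ∀ n, ‖w n‖ = 1 := fun n => norm_smul_inv_norm (hv0 n)
  have hpw : Tendsto (fun n => p (w n)) atTop (𝓝 0) := by
    have hsq : Tendsto (fun n => p (w n) ^ 2) atTop (𝓝 0) :=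
      squeeze_zero (fun n => by positivity)
        (fun n => seminorm_inv_norm_smul_sq_le hc₀ (hv0 n) (hineq n))
        (by simpa using tendsto_const_nhds.mul hv.inv_tendsto_atTop)
    simpa [Real.sqrt_sq (apply_nonneg p _)] using hsq.sqrt
  obtain ⟨x, ψ, hψ, hweak⟩ := exists_subseq_weakly_tendsto_of_bounded hrefl fun n => (hw1 n).le
  obtain ⟨ψ', hψ', hx⟩ :=
    hA1 (w ∘ ψ) x 1 one_pos (hpw.comp hψ.tendsto_atTop) hweak fun k => (hw1 _).ge
  have hσ : Tendsto (ψ ∘ ψ') atTop atTop := (hψ.comp hψ').tendsto_atTop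
  refine ⟨x, ?_, ?_, ?_, fun t ht => hKcl.smul_mem_of_tendsto_inv_norm_smul hKconv h0K
    (fun k => hvK _) (hv.comp hσ) hx ht⟩
  · exact tendsto_nhds_unique ((continuous_norm.tendsto x).comp hx)
      (by simp [Function.comp_def, hw1])
  · exact tendsto_nhds_unique ((hp.tendsto x).comp hx) (hpw.comp hσ)
  · exact ge_of_tendsto ((g.continuous.tendsto x).comp hx) <|
      Eventually.of_forall fun k => neg_le_apply_inv_norm_smul hc₀.le (hv0 _) (hineq _)

end Semicoercive

theorem semicoercive_VI_coercivity_condition_general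
    {V : Type*} [NormedAddCommGroup V] [NormedSpace ℝ V]
    (hrefl : Function.Surjective (NormedSpace.inclusionInDoubleDual ℝ V))
    (p : Seminorm ℝ V) (hp : Continuous p)
    (Y : Set V) (hY : Y = {v : V | p v = 0})
    (A : V →L[ℝ] (V →L[ℝ] ℝ)) (c₀ : ℝ) (hc₀ : 0 < c₀)
    (hsemi : ∀ v : V, c₀ * (p v) ^ 2 ≤ A v v)
    (K : Set V) (hKcl : IsClosed K) (hKconv : Convex ℝ K) (h0K : (0 : V) ∈ K)
    (g : V →L[ℝ] ℝ)
    (φ : V → V → ℝ)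
    (c : ℝ) (hφ0 : ∀ v : V, φ v 0 ≤ c * ‖v‖)
    (hA1 : ∀ (v : ℕ → V) (w : V) (η : ℝ), 0 < η →
      Tendsto (fun n => p (v n)) atTop (nhds 0) →
      (∀ f : V →L[ℝ] ℝ, Tendsto (fun n => f (v n)) atTop (nhds (f w))) →
      (∀ n, η ≤ ‖v n‖) →
      ∃ ψ : ℕ → ℕ, StrictMono ψ ∧ Tendsto (fun k => v (ψ k)) atTop (nhds w))
    (hA2 : Bornology.IsBounded (Y ∩ K) ∨
      ∀ y ∈ Y ∩ K, ‖y‖ = 1 → g y < -c) :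
    ∃ R : ℝ, 0 < R ∧ ∀ v ∈ K, ‖v‖ = R → A v (-v) + φ v 0 + g v < 0 := by
  by_contra! hcon
  have hbad : ∀ n : ℕ, ∃ v ∈ K, ‖v‖ = n + 1 ∧ c₀ * p v ^ 2 ≤ c * ‖v‖ + g v := by
    intro n
    obtain ⟨v, hvK, hvn, hge⟩ := hcon (n + 1) n.cast_add_one_pos
    rw [map_neg] at hge
    exact ⟨v, hvK, hvn, by linarith [hsemi v, hφ0 v]⟩
  choose v hvK hvn hineq using hbad
  have hv0 : ∀ n, v n ≠ 0 := fun n => norm_ne_zero_iff.mp (by rw [hvn]; positivity)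
  have hvtop : Tendsto (fun n => ‖v n‖) atTop atTop := by
    simpa only [hvn] using tendsto_natCast_atTop_atTop.atTop_add tendsto_const_nhds
  obtain ⟨x, hx1, hpx, hgx, hray⟩ := exists_unit_recession_direction_of_tendsto hrefl hp hc₀
    hKcl hKconv h0K hA1 hvK hv0 hvtop hineq
  have hrayYK : ∀ t : ℝ, 0 ≤ t → t • x ∈ Y ∩ K := fun t ht =>
    ⟨by simp [hY, map_smul_eq_mul, hpx], hray t ht⟩
  rcases hA2 with hbdd | hangle
  · exact not_isBounded_of_forall_smul_mem (norm_ne_zero_iff.mp (by rw [hx1]; exact one_ne_zero))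
      hrayYK hbdd
  · linarith [hangle x (by simpa using hrayYK 1 zero_le_one) hx1]

/-- Key lemma in the proof of the semicoercive existence theorem: under its
hypotheses there exists `R > 0` such that
`⟨Av, -v⟩ + φ(v,0) + ⟨g, v⟩ < 0` for all `v ∈ K` with `‖v‖ = R`. -/
theorem semicoercive_VI_coercivity_condition
    {V : Type*} [NormedAddCommGroup V] [NormedSpace ℝ V] [CompleteSpace V]
    (hrefl : Function.Surjective (NormedSpace.inclusionInDoubleDual ℝ V))
    (p : Seminorm ℝ V) (hp : Continuous p)
    (Y : Set V) (hY : Y = {v : V | p v = 0})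
    (A : V →L[ℝ] (V →L[ℝ] ℝ)) (c₀ : ℝ) (hc₀ : 0 < c₀)
    (hsemi : ∀ v : V, c₀ * (p v) ^ 2 ≤ A v v)
    (K : Set V) (hKcl : IsClosed K) (hKconv : Convex ℝ K) (h0K : (0 : V) ∈ K)
    (g : V →L[ℝ] ℝ)
    (φ : V → V → ℝ)
    (hpm : ∀ (u : ℕ → V) (u₀ : V),
      (∀ f : V →L[ℝ] ℝ, Tendsto (fun n => f (u n)) atTop (nhds (f u₀))) →
      0 ≤ Filter.liminf (fun n => φ (u n) u₀) atTop →
      ∀ v : V, Filter.limsup (fun n => φ (u n) v) atTop ≤ φ u₀ v)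
    (husc : ∀ (v : V) (W : Submodule ℝ V), FiniteDimensional ℝ W →
      UpperSemicontinuousOn (fun u => φ u v) (K ∩ (W : Set V)))
    (c : ℝ) (hc : 0 < c) (hφ0 : ∀ v : V, φ v 0 ≤ c * ‖v‖)
    (hA1 : ∀ (v : ℕ → V) (w : V) (η : ℝ), 0 < η →
      Tendsto (fun n => p (v n)) atTop (nhds 0) →
      (∀ f : V →L[ℝ] ℝ, Tendsto (fun n => f (v n)) atTop (nhds (f w))) →
      (∀ n, η ≤ ‖v n‖) →
      ∃ ψ : ℕ → ℕ, StrictMono ψ ∧ Tendsto (fun k => v (ψ k)) atTop (nhds w))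
    (hA2 : Bornology.IsBounded (Y ∩ K) ∨
      ∀ y ∈ Y ∩ K, ‖y‖ = 1 → g y < -c) :
    ∃ R : ℝ, 0 < R ∧ ∀ v ∈ K, ‖v‖ = R → A v (-v) + φ v 0 + g v < 0 :=
  semicoercive_VI_coercivity_condition_general hrefl p hp Y hY A c₀ hc₀ hsemi K hKcl hKconv h0K g φ
    c hφ0 hA1 hA2
end
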